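/- arXiv:2601.09986 — 3 statements merged into one kernel-verified Lean document; each statement's English description precedes it below -/
import Mathlib

section
/- The transitive closure is compatible with the bisimulation progression: if R progresses (with the false predicate) to R', then the transitive closure of R progresses to the transitive closure of R'. In particular, if R progresses to R then the transitive closure of R progresses to itself. -/
/-- Result of a GKAT automaton transition on an atom. -/
inductive GRes (S A : Type) where
  | reject : GRes S A
  | accept : GRes S A
  | step : S → A → GRes S A

/-- Progression with the constantly-false predicate on a single GKAT automaton:
accept mirrors accept, reject mirrors reject, simultaneous transitions use the same
action, and successors under the same action land in `R'`. -/
def ProgressF {S At A : Type} (ζ : S → At → GRes S A) (R R' : S → S → Prop) : Prop :=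
  ∀ s u, R s u → ∀ α,
    ((ζ s α = GRes.accept) ↔ (ζ u α = GRes.accept)) ∧
    ((ζ s α = GRes.reject) ↔ (ζ u α = GRes.reject)) ∧
    (∀ s' p u' q, ζ s α = GRes.step s' p → ζ u α = GRes.step u' q → p = q) ∧
    (∀ s' u' p, ζ s α = GRes.step s' p → ζ u α = GRes.step u' p → R' s' u')

theorem progressF_transGen {S At A : Type} (ζ : S → At → GRes S A)
    (R R' : S → S → Prop) (h : ProgressF ζ R R') :
    ProgressF ζ (Relation.TransGen R) (Relation.TransGen R') := by
  intro s u hsu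
  induction hsu with
  | single hr =>
    intro α
    obtain ⟨h1, h2, h3, h4⟩ := h _ _ hr α
    exact ⟨h1, h2, h3, fun s' u' p hs hu => Relation.TransGen.single (h4 s' u' p hs hu)⟩
  | tail _ hr ih =>
    rename_i u v _
    intro α
    obtain ⟨i1, i2, i3, i4⟩ := ih α
    obtain ⟨j1, j2, j3, j4⟩ := h _ _ hr α
    refine ⟨i1.trans j1, i2.trans j2, ?_, ?_⟩
    · intro s' p v' q hs hv
      cases hmu : ζ u α with
      | accept => simp_all
      | reject => simp_all
      | step u' r =>
        exact (i3 s' p u' r hs hmu).trans (j3 u' r v' q hmu hv)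
    · intro s' v' p hs hv
      cases hmu : ζ u α with
      | accept => simp_all
      | reject => simp_all
      | step u' r =>
        have hpr : p = r := i3 s' p u' r hs hmu
        subst hpr
        exact (i4 s' u' p hs hmu).tail (j4 u' v' p hmu hv)

/-- the transitive closure is compatible with the bisimulation
progression: if `R ⇝ R'` then `R⁺ ⇝ R'⁺`; in particular, if `R ⇝ R` then
`R⁺ ⇝ R⁺`. -/
theorem transGen_compatible {S At A : Type} (ζ : S → At → GRes S A) :
    (∀ R R' : S → S → Prop, ProgressF ζ R R' →
      ProgressF ζ (Relation.TransGen R) (Relation.TransGen R')) ∧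
    (∀ R : S → S → Prop, ProgressF ζ R R →
      ProgressF ζ (Relation.TransGen R) (Relation.TransGen R)) := by
  exact ⟨progressF_transGen ζ, fun R => progressF_transGen ζ R R⟩
end

section
/- Transitive closure is not in general compatible with the trace-equivalence progression: there exists a GKAT automaton and relations R, R' such that R progresses to R' with the dead-state predicate, but the transitive closure of R does not progress to the transitive closure of R'. -/
/-- Finite traces: alternating words of atoms and actions ending in an atom. -/
inductive Trace (At A : Type) where
  | atom : At → Trace At A
  | cons : At → A → Trace At A → Trace At A

/-- Finite trace semantics of a state of a GKAT automaton. -/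
inductive InTrace {S At A : Type} (ζ : S → At → GRes S A) : S → Trace At A → Prop where
  | accept {s α} : ζ s α = GRes.accept → InTrace ζ s (Trace.atom α)
  | step {s α s' p w} : ζ s α = GRes.step s' p → InTrace ζ s' w →
      InTrace ζ s (Trace.cons α p w)

/-- A state is dead when no finite trace starts from it. -/
def Dead {S At A : Type} (ζ : S → At → GRes S A) (s : S) : Prop :=
  ∀ w, ¬ InTrace ζ s w

/-- Progression with the dead-state predicate on a single GKAT automaton. -/
def DProgress {S At A : Type} (ζ : S → At → GRes S A) (R R' : S → S → Prop) : Prop :=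
  ∀ s u, R s u → ∀ α,
    ((ζ s α = GRes.accept) ↔ (ζ u α = GRes.accept)) ∧
    (∀ s' p, ζ s α = GRes.step s' p → ζ u α = GRes.reject → Dead ζ s') ∧
    (∀ u' p, ζ u α = GRes.step u' p → ζ s α = GRes.reject → Dead ζ u') ∧
    (∀ s' p u' q, ζ s α = GRes.step s' p → ζ u α = GRes.step u' q → p ≠ q →
      Dead ζ s' ∧ Dead ζ u') ∧
    (∀ s' u' p, ζ s α = GRes.step s' p → ζ u α = GRes.step u' p → R' s' u')

inductive St : Type where
  | s0 | s1 | s2 | s3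

def zeta : St → Unit → GRes St Unit
  | .s0, _ => .reject
  | .s1, _ => .step .s1 ()
  | .s2, _ => .step .s3 ()
  | .s3, _ => .accept

lemma dead_s1 : Dead zeta St.s1 := by
  intro w
  induction w with
  | atom α =>
    intro h; cases h with
    | accept h => simp [zeta] at h
  | cons α p w ih =>
    intro h; cases h with
    | step h h' =>
      simp only [zeta] at h
      cases h
      exact ih h'

/-- transitive closure is not in general compatible with the
trace-equivalence (dead-state) progression: there exist a GKAT automaton and
relations `R`, `R'` such that `R ⇝_dead R'` but `R⁺ ⇝̸_dead R'⁺`. -/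
theorem transGen_not_compatible_with_dead_progress :
    ∃ (S At A : Type) (ζ : S → At → GRes S A) (R R' : S → S → Prop),
      DProgress ζ R R' ∧
      ¬ DProgress ζ (Relation.TransGen R) (Relation.TransGen R') := by
  refine ⟨St, Unit, Unit, zeta,
    (fun s u => (s = .s0 ∧ u = .s1) ∨ (s = .s1 ∧ u = .s2)),
    (fun s u => s = .s1 ∧ u = .s3), ?_, ?_⟩
  · intro s u hR α
    rcases hR with ⟨rfl, rfl⟩ | ⟨rfl, rfl⟩
    · refine ⟨by simp [zeta], ?_, ?_, ?_, ?_⟩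
      · intro s' p h; simp [zeta] at h
      · intro u' p h _; simp only [zeta] at h; cases h; exact dead_s1
      · intro s' p u' q h; simp [zeta] at h
      · intro s' u' p h; simp [zeta] at h
    · refine ⟨by simp [zeta], ?_, ?_, ?_, ?_⟩
      · intro s' p _ h; simp [zeta] at h
      · intro u' p _ h; simp [zeta] at h
      · intro s' p u' q h h'
        simp only [zeta] at h h'; cases h; cases h'
        intro hpq; exact absurd rfl hpq
      · intro s' u' p h h'
        simp only [zeta] at h h'; cases h; cases h'
        exact ⟨rfl, rfl⟩
  · intro h
    have h02 : Relation.TransGen (fun s u => (s = St.s0 ∧ u = St.s1) ∨ (s = St.s1 ∧ u = St.s2)) St.s0 St.s2 :=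
      Relation.TransGen.tail (Relation.TransGen.single (Or.inl ⟨rfl, rfl⟩)) (Or.inr ⟨rfl, rfl⟩)
    have hd : Dead zeta St.s3 :=
      (h St.s0 St.s2 h02 ()).2.2.1 St.s3 () rfl rfl
    exact hd (Trace.atom ()) (InTrace.accept rfl)
end

section
/- Correspondence between symbolic and concrete progression: for relations R, R' between the state sets of two symbolic GKAT automata, R symbolically progresses to R' if and only if R progresses to R' on the concretizations. -/
/-- Boolean expressions over primitive tests `T`. -/
inductive BExp (T : Type) where
  | zero : BExp T
  | one : BExp T
  | test : T → BExp T
  | and : BExp T → BExp T → BExp T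
  | or : BExp T → BExp T → BExp T
  | not : BExp T → BExp T

/-- Evaluation of a Boolean expression under an atom (truth assignment) `α`. -/
def BExp.eval {T : Type} (α : T → Bool) : BExp T → Bool
  | BExp.zero => false
  | BExp.one => true
  | BExp.test t => α t
  | BExp.and a b => a.eval α && b.eval α
  | BExp.or a b => a.eval α || b.eval α
  | BExp.not a => !a.eval α

/-- The concretization relation of a symbolic GKAT automaton `(ε, δ)`: the state
`s` on atom `α` accepts if some guard in `ε s` is satisfied, transitions according
to a satisfied guard in `δ s`, and rejects otherwise. -/
def ConcRel {T S A : Type} (ε : S → Set (BExp T)) (δ : S → Set (BExp T × S × A))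
    (s : S) (α : T → Bool) : GRes S A → Prop
  | GRes.accept => ∃ b ∈ ε s, BExp.eval α b = true
  | GRes.step s' p => ∃ b, (b, s', p) ∈ δ s ∧ BExp.eval α b = true
  | GRes.reject => (∀ b ∈ ε s, BExp.eval α b = false) ∧
      (∀ x ∈ δ s, BExp.eval α x.1 = false)

open Classical in
/-- The concretization of a symbolic GKAT automaton as a transition function. -/
noncomputable def conc {T S A : Type} (ε : S → Set (BExp T))
    (δ : S → Set (BExp T × S × A)) (s : S) (α : T → Bool) : GRes S A :=
  if _ : ∃ b ∈ ε s, BExp.eval α b = true then GRes.accept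
  else if h : ∃ x ∈ δ s, BExp.eval α x.1 = true then
    GRes.step h.choose.2.1 h.choose.2.2
  else GRes.reject

/-- The atom `α` satisfies the rejection condition `ρ(s)` of a symbolic state:
all guards in `ε s` and `δ s` evaluate to false. -/
def Rejects {T S A : Type} (ε : S → Set (BExp T)) (δ : S → Set (BExp T × S × A))
    (s : S) (α : T → Bool) : Prop :=
  (∀ b ∈ ε s, BExp.eval α b = false) ∧ (∀ x ∈ δ s, BExp.eval α x.1 = false)

/-- Symbolic progression between two symbolic GKAT automata with predicate `P`. -/
def SymbProgress {T S U A : Type}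
    (ε₁ : S → Set (BExp T)) (δ₁ : S → Set (BExp T × S × A))
    (ε₂ : U → Set (BExp T)) (δ₂ : U → Set (BExp T × U × A))
    (P : S ⊕ U → Prop) (R R' : S → U → Prop) : Prop :=
  ∀ s u, R s u →
    (∀ α : T → Bool, (∃ b ∈ ε₁ s, BExp.eval α b = true) ↔
      (∃ a ∈ ε₂ u, BExp.eval α a = true)) ∧
    (∀ b s' p, (b, s', p) ∈ δ₁ s →
      (∃ α, BExp.eval α b = true ∧ Rejects ε₂ δ₂ u α) → P (Sum.inl s')) ∧
    (∀ a u' q, (a, u', q) ∈ δ₂ u →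
      (∃ α, BExp.eval α a = true ∧ Rejects ε₁ δ₁ s α) → P (Sum.inr u')) ∧
    (∀ b s' p a u' q, (b, s', p) ∈ δ₁ s → (a, u', q) ∈ δ₂ u →
      (∃ α, BExp.eval α b = true ∧ BExp.eval α a = true) → p ≠ q →
      P (Sum.inl s') ∧ P (Sum.inr u')) ∧
    (∀ b s' a u' p, (b, s', p) ∈ δ₁ s → (a, u', p) ∈ δ₂ u →
      (∃ α, BExp.eval α b = true ∧ BExp.eval α a = true) → R' s' u')

/-- Atom-wise (concrete) progression between two GKAT automata. -/
def Progress {S U At A : Type} (ζ₁ : S → At → GRes S A) (ζ₂ : U → At → GRes U A)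
    (P : S ⊕ U → Prop) (R R' : S → U → Prop) : Prop :=
  ∀ s u, R s u → ∀ α,
    ((ζ₁ s α = GRes.accept) ↔ (ζ₂ u α = GRes.accept)) ∧
    (∀ s' p, ζ₁ s α = GRes.step s' p → ζ₂ u α = GRes.reject → P (Sum.inl s')) ∧
    (∀ u' p, ζ₂ u α = GRes.step u' p → ζ₁ s α = GRes.reject → P (Sum.inr u')) ∧
    (∀ s' p u' q, ζ₁ s α = GRes.step s' p → ζ₂ u α = GRes.step u' q → p ≠ q →
      P (Sum.inl s') ∧ P (Sum.inr u')) ∧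
    (∀ s' u' p, ζ₁ s α = GRes.step s' p → ζ₂ u α = GRes.step u' p → R' s' u')

/-! Under the disjointness conditions the concretization of a state on an atom `α` accepts,
rejects or steps to `(s', p)` exactly when `α` satisfies some acceptance guard, satisfies
the rejection condition, or satisfies the guard of some transition `(b, s', p)`. After this
translation each clause of symbolic progression is the corresponding clause of concrete
progression with the atom moved from a universal quantifier in front into an existential
in the premise. -/

section Concretization

variable {T S A : Type} {ε : S → Set (BExp T)} {δ : S → Set (BExp T × S × A)} {s : S}
  {α : T → Bool}

theorem conc_eq_accept_iff : conc ε δ s α = GRes.accept ↔ ∃ b ∈ ε s, BExp.eval α b = true := by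
  unfold conc
  split_ifs <;> simp_all

theorem conc_eq_reject_iff : conc ε δ s α = GRes.reject ↔ Rejects ε δ s α := by
  unfold conc Rejects
  split_ifs with hacc hstep
  · simp only [false_iff, not_and_or, not_forall]
    obtain ⟨b, hb, he⟩ := hacc
    exact .inl ⟨b, hb, by simp [he]⟩
  · simp only [false_iff, not_and_or, not_forall]
    obtain ⟨x, hx, he⟩ := hstep
    exact .inr ⟨x, hx, by simp [he]⟩
  · simp only [not_exists, not_and, Bool.not_eq_true] at hacc hstep
    exact iff_of_true rfl ⟨hacc, hstep⟩

theorem conc_eq_step_iff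
    (hεδ : ∀ b ∈ ε s, ∀ x ∈ δ s, ∀ α, ¬(BExp.eval α b = true ∧ BExp.eval α x.1 = true))
    (hδδ : ∀ x ∈ δ s, ∀ y ∈ δ s, x ≠ y →
      ∀ α, ¬(BExp.eval α x.1 = true ∧ BExp.eval α y.1 = true))
    {s' : S} {p : A} :
    conc ε δ s α = GRes.step s' p ↔ ∃ b, (b, s', p) ∈ δ s ∧ BExp.eval α b = true := by
  unfold conc
  split_ifs with hacc hstep
  · simp only [false_iff, not_exists, not_and]
    obtain ⟨c, hc, hec⟩ := hacc
    exact fun b hb he => hεδ c hc _ hb α ⟨hec, he⟩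
  · have hchoose := hstep.choose_spec
    constructor
    · rintro ⟨⟩
      exact ⟨_, hchoose⟩
    · rintro ⟨b, hb, he⟩
      have hchosen : hstep.choose = (b, s', p) :=
        by_contra fun hne => hδδ _ hchoose.1 _ hb hne α ⟨hchoose.2, he⟩
      rw [hchosen]
  · simp only [false_iff, not_exists, not_and]
    push Not at hstep
    exact fun b hb => by simpa using hstep _ hb

end Concretization

theorem symbProgress_iff_progress_general {T S U A : Type}
    (ε₁ : S → Set (BExp T)) (δ₁ : S → Set (BExp T × S × A))
    (ε₂ : U → Set (BExp T)) (δ₂ : U → Set (BExp T × U × A))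
    (h₁εδ : ∀ s, ∀ b ∈ ε₁ s, ∀ x ∈ δ₁ s,
      ∀ α, ¬(BExp.eval α b = true ∧ BExp.eval α x.1 = true))
    (h₁δδ : ∀ s, ∀ x ∈ δ₁ s, ∀ y ∈ δ₁ s, x ≠ y →
      ∀ α, ¬(BExp.eval α x.1 = true ∧ BExp.eval α y.1 = true))
    (h₂εδ : ∀ u, ∀ b ∈ ε₂ u, ∀ x ∈ δ₂ u,
      ∀ α, ¬(BExp.eval α b = true ∧ BExp.eval α x.1 = true))
    (h₂δδ : ∀ u, ∀ x ∈ δ₂ u, ∀ y ∈ δ₂ u, x ≠ y →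
      ∀ α, ¬(BExp.eval α x.1 = true ∧ BExp.eval α y.1 = true))
    (P : S ⊕ U → Prop) (R R' : S → U → Prop) :
    SymbProgress ε₁ δ₁ ε₂ δ₂ P R R' ↔
      Progress (conc ε₁ δ₁) (conc ε₂ δ₂) P R R' := by
  refine forall₃_congr fun s u _ => ?_
  simp only [conc_eq_accept_iff, conc_eq_reject_iff,
    conc_eq_step_iff (h₁εδ s) (h₁δδ s), conc_eq_step_iff (h₂εδ u) (h₂δδ u)]
  constructor
  · rintro ⟨hacc, hrej₂, hrej₁, hdiff, hsame⟩ α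
    exact ⟨hacc α,
      fun s' p ⟨b, hb, he⟩ hr => hrej₂ b s' p hb ⟨α, he, hr⟩,
      fun u' q ⟨a, ha, he⟩ hr => hrej₁ a u' q ha ⟨α, he, hr⟩,
      fun s' p u' q ⟨b, hb, hbe⟩ ⟨a, ha, hae⟩ => hdiff b s' p a u' q hb ha ⟨α, hbe, hae⟩,
      fun s' u' p ⟨b, hb, hbe⟩ ⟨a, ha, hae⟩ => hsame b s' a u' p hb ha ⟨α, hbe, hae⟩⟩
  · intro h
    exact ⟨fun α => (h α).1,
      fun b s' p hb ⟨α, he, hr⟩ => (h α).2.1 s' p ⟨b, hb, he⟩ hr,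
      fun a u' q ha ⟨α, he, hr⟩ => (h α).2.2.1 u' q ⟨a, ha, he⟩ hr,
      fun b s' p a u' q hb ha ⟨α, hbe, hae⟩ => (h α).2.2.2.1 s' p u' q ⟨b, hb, hbe⟩ ⟨a, ha, hae⟩,
      fun b s' a u' p hb ha ⟨α, hbe, hae⟩ => (h α).2.2.2.2 s' u' p ⟨b, hb, hbe⟩ ⟨a, ha, hae⟩⟩

/-- correspondence between symbolic and concrete progression: for
relations between the state sets of two symbolic GKAT automata (satisfying the
disjointedness condition), `R` symbolically progresses to `R'` iff `R`
progresses to `R'` on the concretizations. -/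
theorem symbProgress_iff_progress {T S U A : Type}
    (ε₁ : S → Set (BExp T)) (δ₁ : S → Set (BExp T × S × A))
    (ε₂ : U → Set (BExp T)) (δ₂ : U → Set (BExp T × U × A))
    (h₁εε : ∀ s, ∀ b₁ ∈ ε₁ s, ∀ b₂ ∈ ε₁ s, b₁ ≠ b₂ →
      ∀ α, ¬(BExp.eval α b₁ = true ∧ BExp.eval α b₂ = true))
    (h₁εδ : ∀ s, ∀ b ∈ ε₁ s, ∀ x ∈ δ₁ s,
      ∀ α, ¬(BExp.eval α b = true ∧ BExp.eval α x.1 = true))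
    (h₁δδ : ∀ s, ∀ x ∈ δ₁ s, ∀ y ∈ δ₁ s, x ≠ y →
      ∀ α, ¬(BExp.eval α x.1 = true ∧ BExp.eval α y.1 = true))
    (h₂εε : ∀ u, ∀ b₁ ∈ ε₂ u, ∀ b₂ ∈ ε₂ u, b₁ ≠ b₂ →
      ∀ α, ¬(BExp.eval α b₁ = true ∧ BExp.eval α b₂ = true))
    (h₂εδ : ∀ u, ∀ b ∈ ε₂ u, ∀ x ∈ δ₂ u,
      ∀ α, ¬(BExp.eval α b = true ∧ BExp.eval α x.1 = true))
    (h₂δδ : ∀ u, ∀ x ∈ δ₂ u, ∀ y ∈ δ₂ u, x ≠ y →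
      ∀ α, ¬(BExp.eval α x.1 = true ∧ BExp.eval α y.1 = true))
    (P : S ⊕ U → Prop) (R R' : S → U → Prop) :
    SymbProgress ε₁ δ₁ ε₂ δ₂ P R R' ↔
      Progress (conc ε₁ δ₁) (conc ε₂ δ₂) P R R' :=
  symbProgress_iff_progress_general ε₁ δ₁ ε₂ δ₂ h₁εδ h₁δδ h₂εδ h₂δδ P R R'
end
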